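/- Let I = ℕ^k and for h ∈ {1,…,k} define (y₁,…,y_k) R_h (z₁,…,z_k) iff y_h < z_h. Define f* on H(R₁ ∪ … ∪ R_k) by f*(s) = ĥ(E(s)), where E(s) is the Erdős tree associated to s and ĥ(T) = h_k(T_α, ω·k) for T_α the tree T equipped with the decreasing labelling α. Then f* is strictly decreasing along one-step extensions: if L, L' ∈ H(R₁ ∪ … ∪ R_k) and L' ≻ L, then f*(L') < f*(L); and f* takes values in ω^k + 1. -/

import Mathlib

/-- A colored list over `I` with colors in `Fin k`: a list of elements together with a list
of colors on its edges. -/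
abbrev CL (I : Type*) (k : ℕ) := List I × List (Fin k)

/-- The empty colored list. -/
def nilCL {I : Type*} {k : ℕ} : CL I k := ([], [])

/-- A pair `(L, f)` is a genuine colored list: either both lists are empty, or there is one
color per edge, i.e. `f` has length `|L| - 1`. -/
def IsCL {I : Type*} {k : ℕ} (μ : CL I k) : Prop :=
  (μ.1 = [] ∧ μ.2 = []) ∨ μ.1.length = μ.2.length + 1

/-- `(L, f)` is an `(R₁, …, R_k)`-colored list: it is a colored list and whenever edge `i`
has color `h`, every later element is `R h`-below `x_i`. -/
def IsRCL {I : Type*} {k : ℕ} (R : Fin k → I → I → Prop) (μ : CL I k) : Prop :=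
  IsCL μ ∧ ∀ (i j : ℕ) (hi : i < μ.2.length) (hi' : i < μ.1.length)
    (hj : j < μ.1.length), i < j → R (μ.2[i]'hi) (μ.1[j]'hj) (μ.1[i]'hi')

/-- One-step extension of color `c` on colored lists: append one element, and (if the list
was nonempty) one edge of color `c`. -/
def ExtC {I : Type*} {k : ℕ} (c : Fin k) (μ' μ : CL I k) : Prop :=
  ∃ y : I, (μ.1 = [] ∧ μ' = ([y], [])) ∨
    (μ.1 ≠ [] ∧ μ'.1 = μ.1 ++ [y] ∧ μ'.2 = μ.2 ++ [c])

/-- One-step extension of some color. -/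
def ExtCol {I : Type*} {k : ℕ} (μ' μ : CL I k) : Prop := ∃ c, ExtC c μ' μ

/-- A `k`-ary tree: a set of colored lists containing the empty list, closed under removing
the last element, in which every list has at most one one-step extension of each color. -/
structure IsTree {I : Type*} {k : ℕ} (T : Set (CL I k)) : Prop where
  nil_mem : nilCL ∈ T
  downward : ∀ l m : CL I k, l ∈ T → ExtCol l m → m ∈ T
  unique : ∀ l₁ l₂ l : CL I k, ∀ c : Fin k, l₁ ∈ T → l₂ ∈ T → l ∈ T →
    ExtC c l₁ l → ExtC c l₂ l → l₁ = l₂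

/-- An Erdős tree over `R₁, …, R_k`: a `k`-ary tree all of whose members are
`(R₁, …, R_k)`-colored lists. -/
def IsErdos {I : Type*} {k : ℕ} (R : Fin k → I → I → Prop) (T : Set (CL I k)) : Prop :=
  IsTree T ∧ ∀ μ ∈ T, IsRCL R μ

/-- One-step extension of `k`-ary trees: `T' ≻₁ T` iff `T' = T ∪ {μ}` where `μ ∉ T` is a
one-step extension of some member of `T`. -/
def ExtTree {I : Type*} {k : ℕ} (T' T : Set (CL I k)) : Prop :=
  ∃ (μ l : CL I k) (c : Fin k), l ∈ T ∧ μ ∉ T ∧ ExtC c μ l ∧ T' = T ∪ {μ}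

universe u

/-- Natural (Hessenberg) operations are no longer in Mathlib; this reconstructs them with their
old meaning. `NatOrdinal` is modelled as the multiset of exponents of the Cantor normal form
(base `ω`), so that its addition (multiset union) is the natural sum. -/
abbrev NatOrdinal : Type (u + 1) := Multiset Ordinal.{u}

/-- The ordinal `ω ^ e₁ + ⋯ + ω ^ eₙ` with `e₁ ≥ ⋯ ≥ eₙ` the exponents in the multiset. -/
noncomputable def NatOrdinal.toOrdinal (m : NatOrdinal.{u}) : Ordinal.{u} :=
  ((m.sort (· ≤ ·)).reverse.map fun e => Ordinal.omega0 ^ e).sum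

/-- The multiset of exponents (with multiplicity) of the Cantor normal form of `o` in base `ω`. -/
noncomputable def Ordinal.toNatOrdinal (o : Ordinal.{u}) : NatOrdinal.{u} :=
  ((Ordinal.CNF Ordinal.omega0 o).flatMap fun p =>
    List.replicate (Cardinal.toNat p.2.card) p.1 : List Ordinal.{u})

/-- The natural (Hessenberg) sum of ordinals. -/
noncomputable def Ordinal.nadd (a b : Ordinal.{u}) : Ordinal.{u} :=
  NatOrdinal.toOrdinal (Ordinal.toNatOrdinal a + Ordinal.toNatOrdinal b)

/-- `nmulNat γ m` is the `m`-fold natural (Hessenberg) sum `γ ⊕ ⋯ ⊕ γ`. -/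
noncomputable def nmulNat (γ : Ordinal) : ℕ → Ordinal
  | 0 => 0
  | n + 1 => Ordinal.nadd (nmulNat γ n) γ

/-- Index of the last occurrence of the color `h` in `f` (meaningful when `h ∈ f`): the
position of the lowest edge of color `h`. -/
def lastIdx {k : ℕ} (f : List (Fin k)) (h : Fin k) : ℕ :=
  f.length - 1 - f.reverse.idxOf h

/-- `pval L f h` is `p^h_h`: the `h`-th component of the lowest element of `L` followed by
an edge of color `h`. -/
def pval {k : ℕ} (L : List (Fin k → ℕ)) (f : List (Fin k)) (h : Fin k) : ℕ :=
  (L.getD (lastIdx f h) (fun _ => 0)) h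

/-- The labelling `α` on (nonempty) colored lists over `I = ℕ^k`: the root `(z₁, …, z_k)`
gets `max_i (z_i + 1) ⊕ ω * (k - 1)`; a `j`-node `y` reached using exactly the colors
`h₁, …, h_j` gets `p^{h₁}_{h₁} ⊕ ⋯ ⊕ p^{h_j}_{h_j} ⊕ ω * (k - j)`, where
`y^h = (p^h_1, …, p^h_k)` is the lowest proper ancestor of `y` followed by an edge of color
`h`, `⊕` is the natural sum and `ω * m` the `m`-fold natural sum of `ω`. -/
noncomputable def labelCL {k : ℕ} (μ : CL (Fin k → ℕ) k) : Ordinal.{0} :=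
  if μ.2 = [] then
    Ordinal.nadd ((Finset.univ.sup fun i : Fin k => μ.1.headI i + 1 : ℕ) : Ordinal)
      (nmulNat Ordinal.omega0 (k - 1))
  else
    Ordinal.nadd
      (NatOrdinal.toOrdinal
        (∑ h ∈ μ.2.toFinset, Ordinal.toNatOrdinal ((pval μ.1 μ.2 h : Ordinal))))
      (nmulNat Ordinal.omega0 (k - μ.2.toFinset.card))

/-- `hNil k α = sup { hNil k β * k + 1 : β < α }`, with `* k` the `k`-fold natural sum;
the ordinal height of the set of `k`-branching trees with decreasing labels `< α`. -/
noncomputable def hNil (k : ℕ) (α : Ordinal.{0}) : Ordinal.{0} :=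
  ⨆ β : Set.Iio α, nmulNat (hNil k β.1) k + 1
termination_by α
decreasing_by exact β.2

/-- The vacant child positions of a `k`-ary tree `T`: pairs `(l, c)` where `l` is a node
(a nonempty member) of `T` having no one-step extension of color `c` in `T`. -/
def vacant {I : Type*} {k : ℕ} (T : Set (CL I k)) : Set (CL I k × Fin k) :=
  {p | p.1 ∈ T ∧ p.1 ≠ nilCL ∧ ¬∃ μ ∈ T, ExtC p.2 μ p.1}

/-- `hhat T = ĥ(T) = h_k(T_α, ω·k)` for an Erdős tree `T` over `ℕ^k`: for the empty tree it
is `hNil k (ω·k)`, and for a nonempty tree it is the natural sum, over all vacant child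
positions of `T`, of `hNil k β` where `β` is the `α`-label of the node owning the
position. -/
noncomputable def hhat {k : ℕ} (T : Set (CL (Fin k → ℕ) k)) : Ordinal.{0} :=
  @ite _ (∀ μ ∈ T, μ = nilCL) (Classical.dec _)
    (hNil k (Ordinal.omega0 * (k : Ordinal)))
    (NatOrdinal.toOrdinal
      (∑ᶠ p ∈ vacant T, Ordinal.toNatOrdinal (hNil k (labelCL p.1))))

/-- `H(r)`: the set of `r`-decreasing transitive finite sequences on `I`:
`⟨x₁, …, x_n⟩ ∈ H(r)` iff `i < j` implies `x_j r x_i`. -/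
def HSet {I : Type*} (r : I → I → Prop) : Set (List I) :=
  {l | l.Pairwise fun a b => r b a}

open Classical in
/-- `c(r, y)`: the least color `i` with `y R_i r` (junk value if there is none). -/
noncomputable def colOf {I : Type*} {k : ℕ} (hk : 0 < k) (R : Fin k → I → I → Prop)
    (y r : I) : Fin k :=
  if h : (Finset.univ.filter fun i => R i y r).Nonempty then
    (Finset.univ.filter fun i => R i y r).min' h
  else ⟨0, hk⟩

/-- The `c`-th immediate subtree of a `k`-ary tree with root `r`. -/
def subtreeCL {I : Type*} {k : ℕ} (T : Set (CL I k)) (r : I) (c : Fin k) :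
    Set (CL I k) :=
  {μ | μ = nilCL ∨ (μ.1 ≠ [] ∧ (r :: μ.1, c :: μ.2) ∈ T)}

/-- `⟨r⟩ *_c μ`: junction of the one-element list `⟨r⟩` with the colored list `μ` by an
edge of color `c`. -/
def consCL {I : Type*} {k : ℕ} (r : I) (c : Fin k) : CL I k → CL I k
  | ([], _) => ([r], [])
  | (x :: L, f) => (r :: x :: L, c :: f)

open Classical in
/-- `h(T, y)` computed with fuel: `h(empty tree, y) = ⟨y⟩` and, if `T` has root `r` and
`i = c(r, y)`, `h(T, y) = ⟨r⟩ *_i h(T_i, y)`.  The fuel argument only has to exceed the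
depth of `T` for this to agree with the recursive definition. -/
noncomputable def hLeaf {I : Type*} {k : ℕ} (hk : 0 < k) (R : Fin k → I → I → Prop) :
    ℕ → Set (CL I k) → I → CL I k
  | 0, _, y => ([y], [])
  | n + 1, T, y =>
    if h : ∃ r : I, (([r], []) : CL I k) ∈ T then
      let r := Classical.choose h
      let c := colOf hk R y r
      consCL r c (hLeaf hk R n (subtreeCL T r c) y)
    else ([y], [])

/-- The Erdős tree `E(L)` associated to a homogeneous sequence, by recursion on the
reversed list. -/
noncomputable def ErecAux {I : Type*} {k : ℕ} (hk : 0 < k) (R : Fin k → I → I → Prop) :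
    List I → Set (CL I k)
  | [] => {nilCL}
  | y :: L => ErecAux hk R L ∪ {hLeaf hk R (L.length + 1) (ErecAux hk R L) y}

/-- The map `E` from finite sequences to Erdős trees: `E(⟨⟩) = {nil}` and
`E(L ⌢ ⟨y⟩) = E(L) ∪ {h(E(L), y)}`. -/
noncomputable def Etree {I : Type*} {k : ℕ} (hk : 0 < k) (R : Fin k → I → I → Prop)
    (L : List I) : Set (CL I k) :=
  ErecAux hk R L.reverse

/-!
Adding a new element `y` to the sequence adds one leaf `ν` to the Erdős tree, hung below a node `l`
along a color `c` that was vacant at `l`. In `ĥ` the summand `hNil k (α l)` of the position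
`(l, c)` is replaced by `k` summands `hNil k (α ν)`, one for each vacant position of `ν`. The
labels have the form `ω·j + n` with `j, n` finite, and `α ν < α l`: if `l` is the root,
`max_i (z_i + 1)` drops to `z_c`; if `c` is new on the branch, one `ω` is traded for a natural
number; if `c` is old, `p^c_c` moves down to `l` itself, which lies `R_c`-below the previous node
followed by color `c`. Hence `hNil k (α ν) * k < hNil k (α l)` by the definition of `hNil`, and
the natural sum is strictly monotone in each summand. The first step starts from `hNil k (ω·k)`,
which is at most `ω^k` because `hNil k (ω·j + n) < ω^(j+1)`.
-/

notation:65 a:65 " ♯ " b:66 => Ordinal.nadd a b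

open Ordinal

namespace NatOrdinal

theorem toOrdinal_coe_of_pairwise {l : List Ordinal.{u}} (hl : l.Pairwise (· ≥ ·)) :
    toOrdinal (l : NatOrdinal.{u}) = (l.map (ω ^ ·)).sum := by
  unfold toOrdinal
  congr 2
  refine List.Perm.eq_of_pairwise' (r := (· ≥ ·)) ?_ hl ?_
  · exact List.pairwise_reverse.2 (Multiset.pairwise_sort _ _)
  · exact (List.reverse_perm _).trans (Multiset.coe_eq_coe.1 (Multiset.sort_eq _ _))

theorem exists_pairwise_coe_eq (m : NatOrdinal.{u}) :
    ∃ l : List Ordinal.{u}, l.Pairwise (· ≥ ·) ∧ (l : NatOrdinal.{u}) = m :=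
  ⟨(m.sort (· ≤ ·)).reverse, List.pairwise_reverse.2 (Multiset.pairwise_sort m _),
    by rw [Multiset.coe_reverse, Multiset.sort_eq]⟩

@[simp]
theorem toOrdinal_zero : toOrdinal (0 : NatOrdinal.{u}) = 0 := by
  simp [toOrdinal]

theorem toOrdinal_add_of_forall_le {m₁ m₂ : NatOrdinal.{u}} (h : ∀ x ∈ m₁, ∀ y ∈ m₂, y ≤ x) :
    toOrdinal (m₁ + m₂) = toOrdinal m₁ + toOrdinal m₂ := by
  obtain ⟨l₁, h₁, rfl⟩ := exists_pairwise_coe_eq m₁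
  obtain ⟨l₂, h₂, rfl⟩ := exists_pairwise_coe_eq m₂
  rw [Multiset.coe_add, toOrdinal_coe_of_pairwise (List.pairwise_append.2 ⟨h₁, h₂,
    fun x hx y hy => h x (Multiset.mem_coe.2 hx) y (Multiset.mem_coe.2 hy)⟩),
    toOrdinal_coe_of_pairwise h₁, toOrdinal_coe_of_pairwise h₂, List.map_append, List.sum_append]

theorem toOrdinal_replicate (n : ℕ) (e : Ordinal.{u}) :
    toOrdinal (Multiset.replicate n e) = ω ^ e * n := by
  rw [← Multiset.coe_replicate,
    toOrdinal_coe_of_pairwise (List.pairwise_replicate.2 (Or.inr le_rfl)),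
    List.map_replicate, List.sum_replicate, Ordinal.nsmul_eq_mul]

theorem toOrdinal_singleton (e : Ordinal.{u}) : toOrdinal ({e} : NatOrdinal.{u}) = ω ^ e := by
  simpa using toOrdinal_replicate 1 e

theorem toOrdinal_lt_opow_of_forall_lt {m : NatOrdinal.{u}} {e : Ordinal.{u}}
    (h : ∀ x ∈ m, x < e) : toOrdinal m < ω ^ e := by
  obtain ⟨l, hl, rfl⟩ := exists_pairwise_coe_eq m
  rw [toOrdinal_coe_of_pairwise hl]
  clear hl
  induction l with
  | nil => simpa using opow_pos e omega0_pos
  | cons x l ih =>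
    rw [List.map_cons, List.sum_cons]
    exact isPrincipal_add_omega0_opow e
      ((opow_lt_opow_iff_right one_lt_omega0).2 (h x (by simp)))
      (ih fun y hy => h y (by simp_all))

theorem exists_toOrdinal_eq_opow_mul {m : NatOrdinal.{u}} {e : Ordinal.{u}}
    (h : ∀ x ∈ m, e ≤ x) : ∃ α, toOrdinal m = ω ^ e * α := by
  obtain ⟨l, hl, rfl⟩ := exists_pairwise_coe_eq m
  rw [toOrdinal_coe_of_pairwise hl]
  clear hl
  induction l with
  | nil => exact ⟨0, by simp⟩
  | cons x l ih =>
    obtain ⟨α, hα⟩ := ih fun y hy => h y (by simp_all)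
    refine ⟨ω ^ (x - e) + α, ?_⟩
    rw [List.map_cons, List.sum_cons, hα, mul_add, ← opow_add,
      Ordinal.add_sub_cancel_of_le (h x (by simp))]

/-- Adding the exponent `e` to a Cantor normal form whose value is `x`: the terms `≥ ω ^ e`
make up `ω ^ e * (x / ω ^ e)`, and `ω ^ e` is inserted between them and the rest. -/
noncomputable def insertOpow (e x : Ordinal.{u}) : Ordinal.{u} :=
  ω ^ e * (x / ω ^ e + 1) + x % ω ^ e

theorem insertOpow_opow_mul_add {e α β : Ordinal.{u}} (hβ : β < ω ^ e) :
    insertOpow e (ω ^ e * α + β) = ω ^ e * α + ω ^ e + β := by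
  have hw : ω ^ e ≠ 0 := (opow_pos e omega0_pos).ne'
  rw [insertOpow, mul_add_div _ hw, div_eq_zero_of_lt hβ, add_zero, mul_add_mod_self,
    mod_eq_of_lt hβ, mul_add, mul_one]

theorem strictMono_insertOpow (e : Ordinal.{u}) : StrictMono (insertOpow e) := by
  intro x y hxy
  have hw : ω ^ e ≠ 0 := (opow_pos e omega0_pos).ne'
  rcases (div_le_left hxy.le (ω ^ e)).lt_or_eq with hlt | heq
  · calc insertOpow e x < ω ^ e * (x / ω ^ e + 1) + ω ^ e := by
          unfold insertOpow; gcongr; exact mod_lt x hw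
      _ = ω ^ e * (x / ω ^ e + 1 + 1) := by rw [mul_add_one (ω ^ e) (x / ω ^ e + 1)]
      _ ≤ ω ^ e * (y / ω ^ e + 1) := by gcongr; exact Order.add_one_le_of_lt hlt
      _ ≤ insertOpow e y := le_self_add
  · have hmod : x % ω ^ e < y % ω ^ e := by
      rw [← div_add_mod x (ω ^ e), ← div_add_mod y (ω ^ e), heq] at hxy
      exact lt_of_add_lt_add_left hxy
    unfold insertOpow
    rw [heq]
    gcongr

theorem toOrdinal_cons (e : Ordinal.{u}) (q : NatOrdinal.{u}) :
    toOrdinal (e ::ₘ q) = insertOpow e (toOrdinal q) := by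
  classical
  set A := q.filter (e ≤ ·)
  set B := q.filter (¬ e ≤ ·)
  obtain ⟨α, hα⟩ := exists_toOrdinal_eq_opow_mul (m := A) fun x hx => (Multiset.mem_filter.1 hx).2
  have hB : toOrdinal B < ω ^ e :=
    toOrdinal_lt_opow_of_forall_lt fun x hx => not_le.1 (Multiset.mem_filter.1 hx).2
  have hBe : ∀ y ∈ B, y ≤ e := fun y hy => (not_le.1 (Multiset.mem_filter.1 hy).2).le
  have hAB : ∀ x ∈ A, ∀ y ∈ B, y ≤ x := fun x hx y hy =>
    (hBe y hy).trans (Multiset.mem_filter.1 hx).2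
  have hq : q = A + B := (Multiset.filter_add_not _ q).symm
  have hcons : e ::ₘ q = (A + {e}) + B := by
    rw [hq, ← Multiset.singleton_add]; abel
  have hAe : ∀ x ∈ A + {e}, ∀ y ∈ B, y ≤ x := by
    intro x hx y hy
    rcases Multiset.mem_add.1 hx with hx | hx
    · exact hAB x hx y hy
    · exact Multiset.mem_singleton.1 hx ▸ hBe y hy
  have heA : ∀ x ∈ A, ∀ y ∈ ({e} : NatOrdinal), y ≤ x := fun x hx y hy =>
    Multiset.mem_singleton.1 hy ▸ (Multiset.mem_filter.1 hx).2
  rw [hcons, hq, toOrdinal_add_of_forall_le hAe, toOrdinal_add_of_forall_le heA,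
    toOrdinal_add_of_forall_le hAB, toOrdinal_singleton, hα, insertOpow_opow_mul_add hB]

theorem exists_strictMono_toOrdinal_add (p : NatOrdinal.{u}) :
    ∃ f : Ordinal.{u} → Ordinal.{u}, StrictMono f ∧ ∀ q, toOrdinal (p + q) = f (toOrdinal q) := by
  induction p using Multiset.induction_on with
  | empty => exact ⟨id, strictMono_id, fun q => by simp⟩
  | cons e p ih =>
    obtain ⟨f, hf, hpq⟩ := ih
    exact ⟨insertOpow e ∘ f, (strictMono_insertOpow e).comp hf,
      fun q => by rw [Multiset.cons_add, toOrdinal_cons, hpq]; rfl⟩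

theorem toOrdinal_add_lt_add_left (p : NatOrdinal.{u}) {q r : NatOrdinal.{u}}
    (h : toOrdinal q < toOrdinal r) : toOrdinal (p + q) < toOrdinal (p + r) := by
  obtain ⟨f, hf, hpq⟩ := exists_strictMono_toOrdinal_add p
  rw [hpq, hpq]
  exact hf h

theorem toOrdinal_add_le_add_left (p : NatOrdinal.{u}) {q r : NatOrdinal.{u}}
    (h : toOrdinal q ≤ toOrdinal r) : toOrdinal (p + q) ≤ toOrdinal (p + r) := by
  obtain ⟨f, hf, hpq⟩ := exists_strictMono_toOrdinal_add p
  rw [hpq, hpq]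
  exact hf.monotone h

theorem toOrdinal_add_congr_right (p : NatOrdinal.{u}) {q r : NatOrdinal.{u}}
    (h : toOrdinal q = toOrdinal r) : toOrdinal (p + q) = toOrdinal (p + r) :=
  (toOrdinal_add_le_add_left p h.le).antisymm (toOrdinal_add_le_add_left p h.ge)

theorem toOrdinal_lt_opow_iff {m : NatOrdinal.{u}} {e : Ordinal.{u}} :
    toOrdinal m < ω ^ e ↔ ∀ x ∈ m, x < e := by
  refine ⟨fun h x hx => ?_, toOrdinal_lt_opow_of_forall_lt⟩
  by_contra! hex
  have : ω ^ x ≤ toOrdinal m := by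
    rw [← Multiset.cons_erase hx, toOrdinal_cons, insertOpow]
    exact (Ordinal.le_mul_left _ (by simp)).trans le_self_add
  exact ((opow_le_opow_right omega0_pos hex).trans this).not_gt h

theorem toOrdinal_toNatOrdinal (o : Ordinal.{u}) : toOrdinal (Ordinal.toNatOrdinal o) = o := by
  have hsum : ∀ L : List (Ordinal.{u} × Ordinal.{u}), (∀ p ∈ L, p.2 < ω) →
      ((L.flatMap fun p => List.replicate (Cardinal.toNat p.2.card) p.1).map (ω ^ ·)).sum
        = L.foldr (fun p r => ω ^ p.1 * p.2 + r) 0 := by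
    intro L hL
    induction L with
    | nil => simp
    | cons p L ih =>
      obtain ⟨n, hn⟩ := lt_omega0.1 (hL p (by simp))
      rw [List.flatMap_cons, List.map_append, List.sum_append, ih fun q hq => hL q (by simp [hq]),
        List.foldr_cons, List.map_replicate, List.sum_replicate, nsmul_eq_mul, hn, card_nat,
        Cardinal.toNat_natCast]
  have hpw : ((CNF ω o).flatMap fun p =>
      List.replicate (Cardinal.toNat p.2.card) p.1).Pairwise (· ≥ ·) := by
    rw [List.pairwise_flatMap]
    refine ⟨fun p _ => List.pairwise_replicate.2 (Or.inr le_rfl), ?_⟩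
    have := (CNF.sortedGT ω o).pairwise
    rw [List.pairwise_map] at this
    refine this.imp fun hab x hx y hy => ?_
    rw [List.eq_of_mem_replicate hx, List.eq_of_mem_replicate hy]
    exact hab.le
  rw [Ordinal.toNatOrdinal, toOrdinal_coe_of_pairwise hpw,
    hsum _ fun p hp => CNF.snd_lt one_lt_omega0 hp, CNF.foldr]

theorem nadd_eq_toOrdinal_add {p q : NatOrdinal.{u}} {a b : Ordinal.{u}} (hp : toOrdinal p = a)
    (hq : toOrdinal q = b) : a ♯ b = toOrdinal (p + q) := by
  rw [Ordinal.nadd, toOrdinal_add_congr_right _ ((toOrdinal_toNatOrdinal b).trans hq.symm),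
    add_comm, toOrdinal_add_congr_right _ ((toOrdinal_toNatOrdinal a).trans hp.symm), add_comm]

theorem toOrdinal_nsmul (x : NatOrdinal.{u}) (n : ℕ) :
    toOrdinal (n • x) = nmulNat (toOrdinal x) n := by
  induction n with
  | zero => simp [nmulNat]
  | succ n ih => rw [succ_nsmul, nmulNat, nadd_eq_toOrdinal_add ih rfl]

theorem toNatOrdinal_natCast (n : ℕ) : Ordinal.toNatOrdinal (n : Ordinal.{u}) = .replicate n 0 := by
  rw [Ordinal.toNatOrdinal]
  rcases Nat.eq_zero_or_pos n with rfl | hn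
  · simp [CNF.zero_right]
  · rw [CNF.of_lt (by exact_mod_cast hn.ne') (natCast_lt_omega0 n)]
    simp [card_nat, Multiset.coe_replicate]

theorem toOrdinal_sum_natCast {ι : Type*} (s : Finset ι) (f : ι → ℕ) :
    toOrdinal (∑ i ∈ s, Ordinal.toNatOrdinal (f i : Ordinal.{u})) =
      ((∑ i ∈ s, f i : ℕ) : Ordinal) := by
  simp_rw [toNatOrdinal_natCast]
  have := map_sum (Multiset.replicateAddMonoidHom (0 : Ordinal.{u})) f s
  simp only [Multiset.replicateAddMonoidHom_apply] at this
  rw [← this, toOrdinal_replicate, opow_zero, one_mul]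

end NatOrdinal

namespace Ordinal

theorem nadd_lt_opow {a b e : Ordinal.{u}} (ha : a < ω ^ e) (hb : b < ω ^ e) : a ♯ b < ω ^ e := by
  rw [← NatOrdinal.toOrdinal_toNatOrdinal a, NatOrdinal.toOrdinal_lt_opow_iff] at ha
  rw [← NatOrdinal.toOrdinal_toNatOrdinal b, NatOrdinal.toOrdinal_lt_opow_iff] at hb
  exact NatOrdinal.toOrdinal_lt_opow_iff.2 fun x hx => (Multiset.mem_add.1 hx).elim (ha x) (hb x)

theorem nadd_le_nadd {a b c d : Ordinal.{u}} (hab : a ≤ b) (hcd : c ≤ d) : a ♯ c ≤ b ♯ d := by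
  simp only [nadd]
  calc NatOrdinal.toOrdinal (a.toNatOrdinal + c.toNatOrdinal)
      ≤ NatOrdinal.toOrdinal (a.toNatOrdinal + d.toNatOrdinal) :=
        NatOrdinal.toOrdinal_add_le_add_left _ (by simpa [NatOrdinal.toOrdinal_toNatOrdinal])
    _ = NatOrdinal.toOrdinal (d.toNatOrdinal + a.toNatOrdinal) := by rw [add_comm]
    _ ≤ NatOrdinal.toOrdinal (d.toNatOrdinal + b.toNatOrdinal) :=
        NatOrdinal.toOrdinal_add_le_add_left _ (by simpa [NatOrdinal.toOrdinal_toNatOrdinal])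
    _ = NatOrdinal.toOrdinal (b.toNatOrdinal + d.toNatOrdinal) := by rw [add_comm]

theorem nmulNat_lt_opow {a e : Ordinal.{u}} (ha : a < ω ^ e) (n : ℕ) : nmulNat a n < ω ^ e := by
  induction n with
  | zero => simpa [nmulNat] using opow_pos e omega0_pos
  | succ n ih => exact nadd_lt_opow ih ha

theorem nmulNat_le_nmulNat {a b : Ordinal.{u}} (h : a ≤ b) (n : ℕ) : nmulNat a n ≤ nmulNat b n := by
  induction n with
  | zero => simp [nmulNat]
  | succ n ih => exact nadd_le_nadd ih h

theorem nmulNat_omega0 (j : ℕ) :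
    nmulNat ω j = NatOrdinal.toOrdinal (Multiset.replicate j (1 : Ordinal.{u})) := by
  induction j with
  | zero => simp [nmulNat]
  | succ j ih =>
    rw [nmulNat, NatOrdinal.nadd_eq_toOrdinal_add ih.symm
      (by rw [NatOrdinal.toOrdinal_singleton, opow_one]), ← Multiset.replicate_one,
      ← Multiset.replicate_add]

theorem natCast_nadd_nmulNat_omega0 (n j : ℕ) : (n : Ordinal.{u}) ♯ nmulNat ω j = ω * j + n := by
  have hn : NatOrdinal.toOrdinal (Multiset.replicate n (0 : Ordinal.{u})) = n := by
    simp [NatOrdinal.toOrdinal_replicate]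
  rw [NatOrdinal.nadd_eq_toOrdinal_add hn (nmulNat_omega0 j).symm, add_comm,
    NatOrdinal.toOrdinal_add_of_forall_le, NatOrdinal.toOrdinal_replicate,
    NatOrdinal.toOrdinal_replicate, opow_one, opow_zero, one_mul]
  intro x hx y hy
  rw [Multiset.eq_of_mem_replicate hx, Multiset.eq_of_mem_replicate hy]
  exact zero_le_one

theorem omega0_mul_add_lt_omega0_mul_add {a b : ℕ} (m n : ℕ) (h : a < b) :
    ω * a + m < ω * (b : Ordinal.{u}) + n :=
  calc ω * a + m < ω * a + ω := add_lt_add_right (natCast_lt_omega0 m) _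
    _ = ω * (a + 1 : ℕ) := by push_cast; rw [mul_add_one]
    _ ≤ ω * b := mul_le_mul_right (by exact_mod_cast h) _
    _ ≤ ω * b + n := le_self_add

theorem exists_eq_omega0_mul_add_of_lt {δ : Ordinal.{u}} {j : ℕ} (h : δ < ω * j) :
    ∃ q < j, ∃ n : ℕ, δ = ω * q + n := by
  have hq : δ / ω < j := (lt_mul_iff_div_lt omega0_ne_zero).1 h
  obtain ⟨q, hq'⟩ := lt_omega0.1 (hq.trans (natCast_lt_omega0 j))
  obtain ⟨n, hn⟩ := lt_omega0.1 (mod_lt δ omega0_ne_zero)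
  refine ⟨q, by exact_mod_cast hq' ▸ hq, n, ?_⟩
  rw [← hq', ← hn, div_add_mod]

end Ordinal

section hNil

variable {k : ℕ}

theorem hNil_le_iff {γ X : Ordinal} : hNil k γ ≤ X ↔ ∀ β < γ, nmulNat (hNil k β) k + 1 ≤ X := by
  rw [hNil, Ordinal.iSup_le_iff]
  exact ⟨fun h β hβ => h ⟨β, hβ⟩, fun h β => h β.1 β.2⟩

theorem nmulNat_hNil_lt {β γ : Ordinal} (h : β < γ) : nmulNat (hNil k β) k < hNil k γ :=
  Order.add_one_le_iff.1 (hNil_le_iff.1 le_rfl β h)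

theorem hNil_mono {β γ : Ordinal} (h : β ≤ γ) : hNil k β ≤ hNil k γ :=
  hNil_le_iff.2 fun _ hδ => Order.add_one_le_of_lt (nmulNat_hNil_lt (hδ.trans_le h))

theorem hNil_add_one_le (β : Ordinal) : hNil k (β + 1) ≤ nmulNat (hNil k β) k + 1 :=
  hNil_le_iff.2 fun _ hδ =>
    add_le_add_left (Ordinal.nmulNat_le_nmulNat (hNil_mono (Order.lt_add_one_iff.1 hδ)) k) 1

theorem hNil_le_opow_of_forall_lt {β e : Ordinal} (h : ∀ δ < β, hNil k δ < ω ^ e) :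
    hNil k β ≤ ω ^ e :=
  hNil_le_iff.2 fun δ hδ => Order.add_one_le_of_lt (Ordinal.nmulNat_lt_opow (h δ hδ) k)

theorem hNil_omega0_mul_le_of_forall_lt {j : ℕ}
    (h : ∀ q < j, ∀ n : ℕ, hNil k (ω * q + n) < ω ^ ((q : Ordinal) + 1)) :
    hNil k (ω * j) ≤ ω ^ (j : Ordinal) := by
  refine hNil_le_opow_of_forall_lt fun δ hδ => ?_
  obtain ⟨q, hq, n, rfl⟩ := Ordinal.exists_eq_omega0_mul_add_of_lt hδ
  exact (h q hq n).trans_le (Ordinal.opow_le_opow_right omega0_pos (by exact_mod_cast hq))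

theorem hNil_omega0_mul_add_lt (j n : ℕ) : hNil k (ω * j + n) < ω ^ ((j : Ordinal) + 1) := by
  induction j using Nat.strong_induction_on generalizing n with
  | _ j ihj =>
    have hone : 1 < ω ^ ((j : Ordinal) + 1) :=
      Ordinal.one_lt_opow.2 ⟨Ordinal.one_lt_omega0, (Order.lt_add_one_iff.2 zero_le).ne'⟩
    induction n with
    | zero =>
      rw [Nat.cast_zero, add_zero]
      exact (hNil_omega0_mul_le_of_forall_lt ihj).trans_lt
        ((Ordinal.opow_lt_opow_iff_right Ordinal.one_lt_omega0).2 (Order.lt_add_one_iff.2 le_rfl))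
    | succ n ihn =>
      rw [Nat.cast_succ, ← add_assoc]
      exact (hNil_add_one_le _).trans_lt (Ordinal.isPrincipal_add_omega0_opow _
        (Ordinal.nmulNat_lt_opow ihn k) hone)

theorem hNil_omega0_mul_le (j : ℕ) : hNil k (ω * j) ≤ ω ^ (j : Ordinal) :=
  hNil_omega0_mul_le_of_forall_lt fun q _ n => hNil_omega0_mul_add_lt q n

end hNil

section ColoredList

variable {I : Type*} {k : ℕ}

def snocCL (μ : CL I k) (c : Fin k) (y : I) : CL I k :=
  if μ.1 = [] then ([y], []) else (μ.1 ++ [y], μ.2 ++ [c])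

theorem snocCL_fst (μ : CL I k) (c : Fin k) (y : I) : (snocCL μ c y).1 = μ.1 ++ [y] := by
  unfold snocCL
  split_ifs with h <;> simp [h]

theorem snocCL_of_fst_ne_nil {μ : CL I k} (h : μ.1 ≠ []) (c : Fin k) (y : I) :
    snocCL μ c y = (μ.1 ++ [y], μ.2 ++ [c]) :=
  if_neg h

theorem snocCL_fst_ne_nil (μ : CL I k) (c : Fin k) (y : I) : (snocCL μ c y).1 ≠ [] := by
  simp [snocCL_fst]

theorem snocCL_ne_nilCL (μ : CL I k) (c : Fin k) (y : I) : snocCL μ c y ≠ nilCL :=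
  fun h => snocCL_fst_ne_nil μ c y (by rw [h]; rfl)

theorem extC_iff_exists_snocCL {c : Fin k} {μ' μ : CL I k} :
    ExtC c μ' μ ↔ ∃ y, μ' = snocCL μ c y := by
  unfold ExtC snocCL
  refine exists_congr fun y => ?_
  by_cases h : μ.1 = []
  · simp [h]
  · simp [h, Prod.ext_iff]

theorem eq_nilCL_of_fst_eq_nil {μ : CL I k} (hμ : IsCL μ) (h : μ.1 = []) : μ = nilCL := by
  rcases hμ with ⟨h1, h2⟩ | h1
  · exact Prod.ext h1 h2
  · simp [h] at h1

end ColoredList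

section Label

variable {k : ℕ}

theorem lastIdx_append_self (B : List (Fin k)) (c : Fin k) : lastIdx (B ++ [c]) c = B.length := by
  simp [lastIdx]

theorem lastIdx_append_of_ne {B : List (Fin k)} {c h : Fin k} (hne : h ≠ c) :
    lastIdx (B ++ [c]) h = lastIdx B h := by
  simp only [lastIdx, List.reverse_append, List.reverse_singleton, List.singleton_append,
    List.idxOf_cons_ne _ (Ne.symm hne), List.length_append, List.length_singleton]
  omega

theorem lastIdx_lt_length {B : List (Fin k)} (hB : B ≠ []) (h : Fin k) :
    lastIdx B h < B.length := by
  have := List.length_pos_iff.2 hB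
  unfold lastIdx
  omega

theorem getElem_lastIdx {B : List (Fin k)} {h : Fin k} (hmem : h ∈ B) :
    B[lastIdx B h]'(lastIdx_lt_length (List.ne_nil_of_mem hmem) h) = h := by
  have hidx : B.reverse.idxOf h < B.reverse.length :=
    List.idxOf_lt_length_iff.2 (List.mem_reverse.2 hmem)
  have := List.getElem_idxOf hidx
  rwa [List.getElem_reverse] at this

theorem pval_append_self {A : List (Fin k → ℕ)} {B : List (Fin k)} (hlen : A.length = B.length + 1)
    (y : Fin k → ℕ) (c : Fin k) : pval (A ++ [y]) (B ++ [c]) c = (A[B.length]'(by omega)) c := by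
  rw [pval, lastIdx_append_self, List.getD_append _ _ _ _ (by omega),
    List.getD_eq_getElem _ _ (by omega)]

theorem pval_append_of_ne {A : List (Fin k → ℕ)} {B : List (Fin k)} (hlen : A.length = B.length + 1)
    (y : Fin k → ℕ) {c h : Fin k} (hne : h ≠ c) : pval (A ++ [y]) (B ++ [c]) h = pval A B h := by
  rw [pval, pval, lastIdx_append_of_ne hne, List.getD_append _ _ _ _ (by unfold lastIdx; omega)]

theorem labelCL_of_snd_eq_nil {μ : CL (Fin k → ℕ) k} (h : μ.2 = []) :
    labelCL μ = ω * (k - 1 : ℕ) + (Finset.univ.sup fun i : Fin k => μ.1.headI i + 1 : ℕ) := by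
  rw [labelCL, if_pos h, natCast_nadd_nmulNat_omega0]

theorem labelCL_of_snd_ne_nil {μ : CL (Fin k → ℕ) k} (h : μ.2 ≠ []) :
    labelCL μ = ω * (k - μ.2.toFinset.card : ℕ) + (∑ h ∈ μ.2.toFinset, pval μ.1 μ.2 h : ℕ) := by
  rw [labelCL, if_neg h, NatOrdinal.toOrdinal_sum_natCast, natCast_nadd_nmulNat_omega0]

theorem labelCL_lt_omega0_mul (hk : 0 < k) (μ : CL (Fin k → ℕ) k) : labelCL μ < ω * k := by
  by_cases h : μ.2 = []
  · rw [labelCL_of_snd_eq_nil h]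
    simpa using Ordinal.omega0_mul_add_lt_omega0_mul_add _ 0 (by omega : k - 1 < k)
  · have hpos : 0 < μ.2.toFinset.card := Finset.card_pos.2 (List.toFinset_nonempty_iff _ |>.2 h)
    rw [labelCL_of_snd_ne_nil h]
    simpa using Ordinal.omega0_mul_add_lt_omega0_mul_add _ 0 (by omega : k - μ.2.toFinset.card < k)

end Label

section LabelDecrease

variable {k : ℕ} {R : Fin k → (Fin k → ℕ) → (Fin k → ℕ) → Prop}

theorem getElem_length_apply_lt_pval (hR : ∀ h y z, R h y z → y h < z h)
    {A : List (Fin k → ℕ)} {B : List (Fin k)} (hl : IsRCL R (A, B)) (hlen : A.length = B.length + 1)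
    {c : Fin k} (hc : c ∈ B) : (A[B.length]'(by omega)) c < pval A B c := by
  have hB := List.ne_nil_of_mem hc
  have hlt := lastIdx_lt_length hB c
  have hrel := hl.2 (lastIdx B c) B.length hlt (by dsimp only; omega) (by dsimp only; omega) hlt
  rw [getElem_lastIdx hc] at hrel
  rw [pval, List.getD_eq_getElem _ _ (by omega)]
  exact hR _ _ _ hrel

theorem labelCL_snocCL_lt (hR : ∀ h y z, R h y z → y h < z h) {l : CL (Fin k → ℕ) k}
    (hl : IsRCL R l) (hne : l.1 ≠ []) (c : Fin k) (y : Fin k → ℕ) :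
    labelCL (snocCL l c y) < labelCL l := by
  obtain ⟨A, B⟩ := l
  have hlen : A.length = B.length + 1 := hl.1.resolve_left fun h => hne h.1
  rw [snocCL_of_fst_ne_nil hne, labelCL_of_snd_ne_nil (by simp)]
  rcases eq_or_ne B [] with rfl | hB
  · obtain ⟨x, rfl⟩ := List.length_eq_one_iff.1 hlen
    have hx : x c < Finset.univ.sup fun i : Fin k => x i + 1 :=
      Nat.lt_of_succ_le (Finset.le_sup (f := fun i : Fin k => x i + 1) (Finset.mem_univ c))
    rw [labelCL_of_snd_eq_nil rfl]
    simpa [pval, lastIdx] using hx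
  rw [labelCL_of_snd_ne_nil hB]
  dsimp only
  by_cases hc : c ∈ B
  · have hsum : ∑ h ∈ B.toFinset, pval (A ++ [y]) (B ++ [c]) h < ∑ h ∈ B.toFinset, pval A B h := by
      refine Finset.sum_lt_sum (fun h _ => ?_) ⟨c, List.mem_toFinset.2 hc, ?_⟩
      · rcases eq_or_ne h c with rfl | hne
        · rw [pval_append_self hlen]
          exact (getElem_length_apply_lt_pval hR hl hlen hc).le
        · rw [pval_append_of_ne hlen y hne]
      · rw [pval_append_self hlen]
        exact getElem_length_apply_lt_pval hR hl hlen hc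
    have htf : (B ++ [c]).toFinset = B.toFinset := by simp [hc]
    rw [htf]
    exact add_lt_add_right (Nat.cast_lt.2 hsum) _
  · have htf : (B ++ [c]).toFinset = insert c B.toFinset := by
      ext; simp
    have hcard : (insert c B.toFinset).card = B.toFinset.card + 1 :=
      Finset.card_insert_of_notMem (by simpa using hc)
    have hle : B.toFinset.card + 1 ≤ k := by
      simpa [hcard] using Finset.card_le_univ (insert c B.toFinset)
    rw [htf, hcard]
    exact omega0_mul_add_lt_omega0_mul_add _ _ (by omega)

end LabelDecrease

section Insertion

variable {I : Type*} {k : ℕ}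

theorem colOf_rel (hk : 0 < k) (R : Fin k → I → I → Prop) {y r : I} (h : ∃ i, R i y r) :
    R (colOf hk R y r) y r := by
  classical
  have hne : (Finset.univ.filter fun i => R i y r).Nonempty := by
    obtain ⟨i, hi⟩ := h
    exact ⟨i, by simpa using hi⟩
  rw [colOf, dif_pos hne]
  exact (Finset.mem_filter.1 (Finset.min'_mem _ hne)).2

theorem consCL_of_fst_ne_nil {μ : CL I k} (h : μ.1 ≠ []) (r : I) (c : Fin k) :
    consCL r c μ = (r :: μ.1, c :: μ.2) := by
  obtain ⟨_ | ⟨x, L⟩, f⟩ := μ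
  · exact absurd rfl h
  · rfl

theorem consCL_snocCL (r : I) (c : Fin k) (l : CL I k) (c' : Fin k) (y : I) :
    consCL r c (snocCL l c' y) = snocCL (consCL r c l) (if l.1 = [] then c else c') y := by
  obtain ⟨_ | ⟨x, L⟩, f⟩ := l <;> simp [snocCL, consCL]

theorem mem_subtreeCL_iff_consCL_mem {T : Set (CL I k)} {r : I} {c : Fin k} {μ : CL I k}
    (h : μ.1 ≠ []) : μ ∈ subtreeCL T r c ↔ consCL r c μ ∈ T := by
  have hμ : μ ≠ nilCL := fun h' => h (by rw [h']; rfl)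
  simp [subtreeCL, hμ, h, consCL_of_fst_ne_nil h]

theorem consCL_mem_of_mem_subtreeCL {T : Set (CL I k)} {r : I} (hr : (([r], []) : CL I k) ∈ T)
    {c : Fin k} {μ : CL I k} (hμ : μ ∈ subtreeCL T r c) : consCL r c μ ∈ T := by
  rcases hμ with rfl | ⟨h, hμ⟩
  · exact hr
  · rwa [consCL_of_fst_ne_nil h]

def IsBelowAlongEdges (R : Fin k → I → I → Prop) (y : I) (μ : CL I k) : Prop :=
  ∀ (i : ℕ) (hi : i < μ.2.length) (hi' : i < μ.1.length), R (μ.2[i]'hi) y (μ.1[i]'hi')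

theorem IsBelowAlongEdges.consCL {R : Fin k → I → I → Prop} {y r : I} {c : Fin k} {μ : CL I k}
    (hμ : IsBelowAlongEdges R y μ) (hne : μ.1 ≠ []) (hr : R c y r) :
    IsBelowAlongEdges R y (consCL r c μ) := by
  rw [consCL_of_fst_ne_nil hne]
  rintro (_ | i) hi hi'
  · exact hr
  · exact hμ i (by simpa using hi) (by simpa using hi')

theorem isRCL_snocCL {R : Fin k → I → I → Prop} {l : CL I k} (hl : IsRCL R l) {c : Fin k} {y : I}
    (hy : IsBelowAlongEdges R y (snocCL l c y)) : IsRCL R (snocCL l c y) := by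
  by_cases hne : l.1 = []
  · have hν : snocCL l c y = ([y], []) := if_pos hne
    rw [hν]
    exact ⟨Or.inr rfl, fun i _ hi => by simp at hi⟩
  have hlen : l.1.length = l.2.length + 1 := hl.1.resolve_left fun h => hne h.1
  rw [snocCL_of_fst_ne_nil hne] at hy ⊢
  refine ⟨Or.inr (by simp [hlen]), fun i j hi hi' hj hij => ?_⟩
  simp only [List.length_append, List.length_singleton] at hi hi' hj
  rcases Nat.lt_or_ge j l.1.length with hjl | hjl
  · simp only [List.getElem_append_left (by omega : i < l.2.length),
      List.getElem_append_left hjl, List.getElem_append_left (by omega : i < l.1.length)]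
    exact hl.2 i j (by omega) (by omega) hjl hij
  · obtain rfl : j = l.1.length := by omega
    simpa using hy i (by simpa using hi) (by simpa using hi')

variable (hk : 0 < k) (R : Fin k → I → I → Prop)

theorem exists_hLeaf_eq_snocCL (n : ℕ) (T : Set (CL I k)) (y : I) (hnil : nilCL ∈ T)
    (hdepth : ∀ μ ∈ T, μ.1.length ≤ n) (hy : ∀ μ ∈ T, ∀ z ∈ μ.1, ∃ i, R i y z) :
    ∃ l ∈ T, ∃ c, hLeaf hk R n T y = snocCL l c y ∧ (∀ y', snocCL l c y' ∉ T) ∧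
      IsBelowAlongEdges R y (hLeaf hk R n T y) := by
  have hleaf : ∀ c : Fin k, ([y], []) = snocCL (nilCL : CL I k) c y := fun c => rfl
  have hbelow : IsBelowAlongEdges R y (([y], []) : CL I k) := fun i hi => by simp at hi
  induction n generalizing T with
  | zero =>
    refine ⟨nilCL, hnil, ⟨0, hk⟩, hleaf _, fun y' hmem => ?_, hbelow⟩
    simpa [snocCL, nilCL] using hdepth _ hmem
  | succ n ih =>
    by_cases hroot : ∃ r : I, (([r], []) : CL I k) ∈ T
    · set r := Classical.choose hroot
      have hr : (([r], []) : CL I k) ∈ T := Classical.choose_spec hroot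
      set c := colOf hk R y r
      obtain ⟨l, hl, c', heq, hnew, hbelow'⟩ := ih (subtreeCL T r c) (Or.inl rfl)
        (by
          rintro μ (rfl | ⟨-, hμ⟩)
          · exact Nat.zero_le _
          · simpa using hdepth _ hμ)
        (by
          rintro μ (rfl | ⟨-, hμ⟩) z hz
          · simp [nilCL] at hz
          · exact hy _ hμ z (List.mem_cons_of_mem r hz))
      have hcons : hLeaf hk R (n + 1) T y = consCL r c (hLeaf hk R n (subtreeCL T r c) y) := by
        rw [hLeaf, dif_pos hroot]
      refine ⟨consCL r c l, consCL_mem_of_mem_subtreeCL hr hl, if l.1 = [] then c else c',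
        by rw [hcons, heq, consCL_snocCL], fun y' hmem => hnew y' ?_, ?_⟩
      · rwa [mem_subtreeCL_iff_consCL_mem (snocCL_fst_ne_nil _ _ _), consCL_snocCL]
      · rw [hcons]
        exact hbelow'.consCL (heq ▸ snocCL_fst_ne_nil _ _ _)
          (colOf_rel hk R (hy _ hr r (List.mem_singleton_self r)))
    · have hnone : hLeaf hk R (n + 1) T y = ([y], []) := by rw [hLeaf, dif_neg hroot]
      refine ⟨nilCL, hnil, ⟨0, hk⟩, hnone.trans (hleaf _), fun y' hmem => hroot ⟨y', hmem⟩, ?_⟩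
      rw [hnone]
      exact hbelow

end Insertion

section ErdosTree

variable {I : Type*} {k : ℕ}

structure IsRCLFamilyOver (R : Fin k → I → I → Prop) (M : List I) (T : Set (CL I k)) : Prop where
  nil_mem : nilCL ∈ T
  finite : T.Finite
  isRCL : ∀ μ ∈ T, IsRCL R μ
  length_le : ∀ μ ∈ T, μ.1.length ≤ M.length
  mem_of_mem : ∀ μ ∈ T, ∀ z ∈ μ.1, z ∈ M

theorem IsRCLFamilyOver.union_snocCL {R : Fin k → I → I → Prop} {M : List I} {T : Set (CL I k)}
    (hT : IsRCLFamilyOver R M T) {l : CL I k} (hl : l ∈ T) {c : Fin k} {y : I}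
    (hy : IsBelowAlongEdges R y (snocCL l c y)) :
    IsRCLFamilyOver R (y :: M) (T ∪ {snocCL l c y}) where
  nil_mem := Or.inl hT.nil_mem
  finite := hT.finite.union (Set.finite_singleton _)
  isRCL := by
    rintro μ (hμ | rfl)
    · exact hT.isRCL μ hμ
    · exact isRCL_snocCL (hT.isRCL l hl) hy
  length_le := by
    rintro μ (hμ | rfl)
    · exact (hT.length_le μ hμ).trans (Nat.le_succ _)
    · simpa [snocCL_fst] using hT.length_le l hl
  mem_of_mem := by
    rintro μ (hμ | rfl) z hz
    · exact List.mem_cons_of_mem y (hT.mem_of_mem μ hμ z hz)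
    · rcases List.mem_append.1 ((snocCL_fst l c y) ▸ hz) with hz | hz
      · exact List.mem_cons_of_mem y (hT.mem_of_mem l hl z hz)
      · simp_all

variable (hk : 0 < k) (R : Fin k → I → I → Prop)

theorem exists_erecAux_cons_eq_union_snocCL {M : List I} (hT : IsRCLFamilyOver R M (ErecAux hk R M))
    {y : I} (hy : ∀ x ∈ M, ∃ i, R i y x) :
    ∃ l ∈ ErecAux hk R M, ∃ c, ErecAux hk R (y :: M) = ErecAux hk R M ∪ {snocCL l c y} ∧
      (∀ y', snocCL l c y' ∉ ErecAux hk R M) ∧ IsBelowAlongEdges R y (snocCL l c y) := by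
  obtain ⟨l, hl, c, heq, hnew, hbelow⟩ := exists_hLeaf_eq_snocCL hk R (M.length + 1) _ y
    hT.nil_mem (fun μ hμ => (hT.length_le μ hμ).trans (Nat.le_succ _))
    (fun μ hμ z hz => hy z (hT.mem_of_mem μ hμ z hz))
  exact ⟨l, hl, c, by rw [ErecAux, heq], hnew, heq ▸ hbelow⟩

theorem isRCLFamilyOver_erecAux (M : List I) (hM : M.Pairwise fun a b => ∃ i, R i a b) :
    IsRCLFamilyOver R M (ErecAux hk R M) := by
  induction M with
  | nil =>
    refine ⟨rfl, Set.finite_singleton _, ?_, ?_, ?_⟩ <;> rintro μ (rfl : μ = nilCL)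
    · exact ⟨Or.inl ⟨rfl, rfl⟩, fun i j hi => by simp [nilCL] at hi⟩
    · simp [nilCL]
    · simp [nilCL]
  | cons y M ih =>
    obtain ⟨hy, hM⟩ := List.pairwise_cons.1 hM
    obtain ⟨l, hl, c, heq, -, hbelow⟩ := exists_erecAux_cons_eq_union_snocCL hk R (ih hM) hy
    rw [heq]
    exact (ih hM).union_snocCL hl hbelow

theorem exists_root_mem_erecAux {M : List I} (hM : M ≠ []) :
    ∃ r : I, (([r], []) : CL I k) ∈ ErecAux hk R M := by
  induction M with
  | nil => exact absurd rfl hM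
  | cons y M ih =>
    rcases eq_or_ne M [] with rfl | hM'
    · have hnoroot : ¬∃ r : I, (([r], []) : CL I k) ∈ ErecAux hk R [] := by
        rintro ⟨r, hr⟩
        simp [ErecAux, nilCL] at hr
      refine ⟨y, Or.inr ?_⟩
      rw [hLeaf, dif_neg hnoroot]
      rfl
    · obtain ⟨r, hr⟩ := ih hM'
      exact ⟨r, Or.inl hr⟩

end ErdosTree

section Vacancy

variable {I : Type*} {k : ℕ}

theorem vacant_finite {T : Set (CL I k)} (hT : T.Finite) : (vacant T).Finite :=
  (hT.prod Set.finite_univ).subset fun _ hp => ⟨hp.1, trivial⟩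

theorem vacant_singleton_nilCL : vacant ({nilCL} : Set (CL I k)) = ∅ :=
  Set.eq_empty_of_forall_notMem fun _ hp => hp.2.1 hp.1

theorem eq_of_snocCL_eq_snocCL {m l : CL I k} (hm : m.1 ≠ []) {c' c : Fin k} {y' y : I}
    (h : snocCL m c' y' = snocCL l c y) : m = l ∧ c' = c := by
  rw [snocCL_of_fst_ne_nil hm] at h
  by_cases hl : l.1 = []
  · rw [show snocCL l c y = ([y], []) from if_pos hl] at h
    simp at h
  · rw [snocCL_of_fst_ne_nil hl, Prod.mk.injEq] at h
    obtain ⟨h1, -⟩ := List.append_inj' h.1 rfl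
    obtain ⟨h2, h3⟩ := List.append_inj' h.2 rfl
    exact ⟨Prod.ext h1 h2, by simpa using h3⟩

theorem vacant_union_snocCL {T : Set (CL I k)} (hcl : ∀ μ ∈ T, IsCL μ) {y : I}
    (hy : ∀ μ ∈ T, y ∉ μ.1) (l : CL I k) (c : Fin k) :
    vacant (T ∪ {snocCL l c y}) = vacant T \ {(l, c)} ∪ {snocCL l c y} ×ˢ Set.univ := by
  set ν := snocCL l c y
  have hyν : y ∈ ν.1 := by simp [ν, snocCL_fst]
  have hνext : ∀ c' μ, μ ∈ T ∪ {ν} → ¬ExtC c' μ ν := by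
    rintro c' μ hμ ⟨y', hy'⟩
    rcases hy' with ⟨h, -⟩ | ⟨-, h, -⟩
    · exact snocCL_fst_ne_nil l c y h
    · rcases hμ with hμ | rfl
      · exact hy μ hμ (by simp [h, hyν])
      · simpa using congrArg List.length h
  ext ⟨m, c'⟩
  simp only [vacant, Set.mem_ofPred_eq, Set.mem_union, Set.mem_sdiff, Set.mem_singleton_iff,
    Set.mem_prod, Set.mem_univ, and_true, Prod.mk.injEq]
  constructor
  · rintro ⟨hm | rfl, hmnil, hnoext⟩
    · refine Or.inl ⟨⟨hm, hmnil, fun ⟨μ, hμ, he⟩ => hnoext ⟨μ, Or.inl hμ, he⟩⟩, ?_⟩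
      rintro ⟨rfl, rfl⟩
      exact hnoext ⟨ν, Or.inr rfl, extC_iff_exists_snocCL.2 ⟨y, rfl⟩⟩
    · exact Or.inr rfl
  · rintro (⟨⟨hm, hmnil, hnoext⟩, hne⟩ | rfl)
    · refine ⟨Or.inl hm, hmnil, ?_⟩
      rintro ⟨μ, hμ | rfl, he⟩
      · exact hnoext ⟨μ, hμ, he⟩
      · obtain ⟨y', hy'⟩ := extC_iff_exists_snocCL.1 he
        have hm1 : m.1 ≠ [] := fun h => hmnil (eq_nilCL_of_fst_eq_nil (hcl m hm) h)
        exact hne (eq_of_snocCL_eq_snocCL hm1 hy'.symm)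
    · exact ⟨Or.inr rfl, snocCL_ne_nilCL l c y, fun ⟨μ, hμ, he⟩ => hνext c' μ hμ he⟩

theorem hhat_singleton_nilCL : hhat ({nilCL} : Set (CL (Fin k → ℕ) k)) = hNil k (ω * k) :=
  if_pos fun _ h => h

theorem hhat_eq_toOrdinal_finsum {T : Set (CL (Fin k → ℕ) k)} {μ : CL (Fin k → ℕ) k} (hμ : μ ∈ T)
    (hne : μ ≠ nilCL) :
    hhat T = NatOrdinal.toOrdinal (∑ᶠ p ∈ vacant T, Ordinal.toNatOrdinal (hNil k (labelCL p.1))) :=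
  if_neg fun h => hne (h μ hμ)

theorem hhat_union_snocCL {T : Set (CL (Fin k → ℕ) k)} (hT : T.Finite) (hcl : ∀ μ ∈ T, IsCL μ)
    {y : Fin k → ℕ} (hy : ∀ μ ∈ T, y ∉ μ.1) (l : CL (Fin k → ℕ) k) (c : Fin k) :
    hhat (T ∪ {snocCL l c y}) = NatOrdinal.toOrdinal
      ((∑ᶠ p ∈ vacant T \ {(l, c)}, Ordinal.toNatOrdinal (hNil k (labelCL p.1))) +
        k • Ordinal.toNatOrdinal (hNil k (labelCL (snocCL l c y)))) := by
  have hprod : ({snocCL l c y} ×ˢ Set.univ : Set (CL (Fin k → ℕ) k × Fin k)) =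
      ↑(({snocCL l c y} : Finset (CL (Fin k → ℕ) k)) ×ˢ (Finset.univ : Finset (Fin k))) := by
    rw [Finset.coe_product, Finset.coe_singleton, Finset.coe_univ]
  rw [hhat_eq_toOrdinal_finsum (Or.inr rfl) (snocCL_ne_nilCL l c y), vacant_union_snocCL hcl hy,
    finsum_mem_union _ ((vacant_finite hT).sdiff) (Set.toFinite _), hprod, finsum_mem_coe_finset,
    Finset.sum_product, Finset.sum_singleton]
  · simp
  · rw [Set.disjoint_left]
    rintro ⟨m, c'⟩ ⟨⟨hm, -⟩, -⟩ ⟨rfl, -⟩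
    exact hy _ hm (by simp [snocCL_fst])

end Vacancy

section Descent

variable {k : ℕ} (hk : 0 < k) {R : Fin k → (Fin k → ℕ) → (Fin k → ℕ) → Prop}

theorem hhat_erecAux_cons_lt (hR : ∀ h y z, R h y z → y h < z h) {M : List (Fin k → ℕ)}
    {y : Fin k → ℕ} (hM : (y :: M).Pairwise fun a b => ∃ i, R i a b) :
    hhat (ErecAux hk R (y :: M)) < hhat (ErecAux hk R M) := by
  obtain ⟨hyM, hM⟩ := List.pairwise_cons.1 hM
  have hT := isRCLFamilyOver_erecAux hk R M hM
  obtain ⟨l, hl, c, heq, hnew, -⟩ := exists_erecAux_cons_eq_union_snocCL hk R hT hyM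
  have hyT : ∀ μ ∈ ErecAux hk R M, y ∉ μ.1 := fun μ hμ hyμ => by
    obtain ⟨i, hi⟩ := hyM y (hT.mem_of_mem μ hμ y hyμ)
    exact (hR i y y hi).false
  have hcl : ∀ μ ∈ ErecAux hk R M, IsCL μ := fun μ hμ => (hT.isRCL μ hμ).1
  have hnu : NatOrdinal.toOrdinal (k • Ordinal.toNatOrdinal (hNil k (labelCL (snocCL l c y)))) =
      nmulNat (hNil k (labelCL (snocCL l c y))) k := by
    rw [NatOrdinal.toOrdinal_nsmul, NatOrdinal.toOrdinal_toNatOrdinal]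
  rw [heq, hhat_union_snocCL hT.finite hcl hyT]
  rcases eq_or_ne M [] with rfl | hM
  · rw [show ErecAux hk R [] = {nilCL} from rfl, vacant_singleton_nilCL, Set.empty_sdiff,
      finsum_mem_empty, zero_add, hnu, hhat_singleton_nilCL]
    exact nmulNat_hNil_lt (labelCL_lt_omega0_mul hk _)
  obtain ⟨r, hr⟩ := exists_root_mem_erecAux hk R hM
  have hlne : l.1 ≠ [] := fun h => hnew r (by rwa [eq_nilCL_of_fst_eq_nil (hcl l hl) h])
  have hlc : (l, c) ∈ vacant (ErecAux hk R M) :=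
    ⟨hl, fun h => hlne (by rw [show l = nilCL from h]; rfl),
      fun ⟨μ, hμ, he⟩ => by obtain ⟨y', rfl⟩ := extC_iff_exists_snocCL.1 he; exact hnew y' hμ⟩
  rw [hhat_eq_toOrdinal_finsum hr (fun h => by simp [nilCL] at h),
    ← finsum_mem_add_sdiff (Set.singleton_subset_iff.2 hlc) (vacant_finite hT.finite),
    finsum_mem_singleton, add_comm (Ordinal.toNatOrdinal _)]
  refine NatOrdinal.toOrdinal_add_lt_add_left _ ?_
  rw [hnu, NatOrdinal.toOrdinal_toNatOrdinal]
  exact nmulNat_hNil_lt (labelCL_snocCL_lt hR (hT.isRCL l hl) hlne c y)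

theorem hhat_etree_append_lt (hR : ∀ h y z, R h y z → y h < z h) {L : List (Fin k → ℕ)}
    {y : Fin k → ℕ} (hL : L ++ [y] ∈ HSet fun x y => ∃ i, R i x y) :
    hhat (Etree hk R (L ++ [y])) < hhat (Etree hk R L) := by
  have hrev : (L ++ [y]).reverse = y :: L.reverse := by simp
  have hp : (y :: L.reverse).Pairwise fun a b => ∃ i, R i a b := by
    rw [← hrev, List.pairwise_reverse]
    exact hL
  rw [Etree, Etree, hrev]
  exact hhat_erecAux_cons_lt hk hR hp

theorem hhat_etree_le (hR : ∀ h y z, R h y z → y h < z h) {L : List (Fin k → ℕ)}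
    (hL : L ∈ HSet fun x y => ∃ i, R i x y) : hhat (Etree hk R L) ≤ ω ^ (k : Ordinal) := by
  induction L using List.reverseRecOn with
  | nil => exact hhat_singleton_nilCL.trans_le (hNil_omega0_mul_le k)
  | append_singleton L y ih =>
    exact (hhat_etree_append_lt hk hR hL).le.trans
      (ih (hL.sublist (List.sublist_append_left L [y])))

end Descent

/-- over `I = ℕ^k` with `R h y z ↔ y h < z h`, the map
`f*(s) = ĥ(E(s)) = h_k(E(s)_α, ω·k)` on `H(R₁ ∪ ⋯ ∪ R_k)` takes values in `ω^k + 1`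
(i.e. `f*(s) ≤ ω^k`) and is strictly decreasing along one-step extensions:
if `L' ≻ L` then `f*(L') < f*(L)`. -/
theorem stmt_15 (k : ℕ) (hk : 0 < k)
    (R : Fin k → (Fin k → ℕ) → (Fin k → ℕ) → Prop)
    (hR : ∀ (h : Fin k) (y z : Fin k → ℕ), R h y z ↔ y h < z h) :
    (∀ L L' : List (Fin k → ℕ),
      L ∈ HSet (fun x y => ∃ i, R i x y) → L' ∈ HSet (fun x y => ∃ i, R i x y) →
      (∃ y, L' = L ++ [y]) → hhat (Etree hk R L') < hhat (Etree hk R L)) ∧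
    (∀ L ∈ HSet (fun x y => ∃ i, R i x y),
      hhat (Etree hk R L) ≤ Ordinal.omega0 ^ (k : Ordinal)) := by
  have hR' : ∀ h y z, R h y z → y h < z h := fun h y z => (hR h y z).1
  refine ⟨?_, fun L hL => hhat_etree_le hk hR' hL⟩
  rintro L _ - hL' ⟨y, rfl⟩
  exact hhat_etree_append_lt hk hR' hL'
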